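/- In the dining cryptographers protocol with 3 cryptographers and 3 independent fair coins, if cryptographer j paid, then the joint distribution of the three announcements is the same for every value of j ∈ {1,2,3}: conditioned on any fixed pattern of announcements with odd parity, each cryptographer is the payer with equal probability (given a uniform prior over the payer). In particular, the announcements reveal no information about which cryptographer paid. -/
import Mathlib


open Finset

/-- Dining cryptographers, anonymity: for every payer j and every odd-parity
announcement triple t, exactly 2 of the 8 equally likely coin assignments
produce the announcements t.  Hence the announcement distribution is uniform
over the four odd-parity triples, independently of who paid. -/
theorem dining_cryptographers_anonymous (j : Fin 3) (t : Fin 3 → Bool)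
    (ht : xor (t 0) (xor (t 1) (t 2)) = true) :
    (univ.filter (fun c : Fin 3 → Bool =>
      ∀ i, (if i = j then !(xor (c i) (c (i - 1))) else xor (c i) (c (i - 1)))
        = t i)).card = 2 := by
  have key : ∀ c : Fin 3 → Bool,
      (∀ i, (if i = j then !(xor (c i) (c (i - 1))) else xor (c i) (c (i - 1))) = t i)
      ↔ ((if 0 = j then !(xor (c 0) (c (0 - 1))) else xor (c 0) (c (0 - 1))) = t 0
        ∧ (if 1 = j then !(xor (c 1) (c (1 - 1))) else xor (c 1) (c (1 - 1))) = t 1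
        ∧ (if 2 = j then !(xor (c 2) (c (2 - 1))) else xor (c 2) (c (2 - 1))) = t 2) := by
    intro c
    constructor
    · intro h; exact ⟨h 0, h 1, h 2⟩
    · rintro ⟨h0, h1, h2⟩ i
      fin_cases i <;> assumption
  simp only [key]
  revert ht
  fin_cases j <;> cases h0 : t 0 <;> cases h1 : t 1 <;> cases h2 : t 2 <;>
    simp (config := {decide := true}) [h0, h1, h2]
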